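/- Let G be a 2-edge-connected graph with chain decomposition C1, ..., C_{m-n+1}. If vertices u and v satisfy u ≤ v (u is an ancestor of v in the DFS tree), u s-belongs to chain C and v s-belongs to chain D, then C is an ancestor of D in the parent-tree on chains. -/
import Mathlib


open SimpleGraph

variable {V : Type*} [Fintype V] [DecidableEq V]

/-- `G` is `k`-edge-connected. -/
def EdgeConnGE (G : SimpleGraph V) (k : ℕ) : Prop :=
  2 ≤ Fintype.card V ∧ ∀ S : Finset (Sym2 V), S.card < k → (G.deleteEdges ↑S).Connected

/-- A DFS tree of `G`: a rooted spanning tree (given by a parent function) whose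
tree edges are edges of `G` and such that every edge of `G` joins two
ancestor-comparable vertices. -/
structure DFSTree (G : SimpleGraph V) where
  root : V
  parent : V → V
  parent_root : parent root = root
  parent_adj : ∀ v, v ≠ root → G.Adj v (parent v)
  reaches_root : ∀ v, ∃ n, parent^[n] v = root
  dfs_edge : ∀ u v, G.Adj u v → (∃ n, parent^[n] v = u) ∨ (∃ n, parent^[n] u = v)

/-- `a` is an ancestor of `b` in the DFS tree (possibly `a = b`). -/
def DFSTree.Anc {G : SimpleGraph V} (t : DFSTree G) (a b : V) : Prop :=
  ∃ n, t.parent^[n] b = a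

/-- `e` is a tree edge of the DFS tree. -/
def DFSTree.TreeEdge {G : SimpleGraph V} (t : DFSTree G) (e : Sym2 V) : Prop :=
  ∃ v, v ≠ t.root ∧ e = s(v, t.parent v)

/-- A 2-edge-cut: two distinct edges of `G` whose removal disconnects `G`. -/
def Is2EdgeCut (G : SimpleGraph V) (e₁ e₂ : Sym2 V) : Prop :=
  e₁ ∈ G.edgeSet ∧ e₂ ∈ G.edgeSet ∧ e₁ ≠ e₂ ∧ ¬ (G.deleteEdges {e₁, e₂}).Connected


/-- A chain decomposition of `G` with respect to the DFS tree `t`.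

Vertices are processed in DFS order (recorded by the numbering `num`); when a
vertex `v = src i` is processed, each back-edge `s(src i, low i)` starting at it
generates the chain `Cᵢ`, which consists of this back-edge together with the
tree path from `low i` upward until the first already visited vertex `tgt i`.
A vertex counts as visited (just before chain `i` is built) if its DFS number
is at most that of `src i`, or if it lies on an earlier chain `Cⱼ`, `j < i`
(i.e. it equals `src j` or lies on the tree path from `low j` up to `tgt j`). -/
structure ChainDecomp (G : SimpleGraph V) (t : DFSTree G) where
  /-- the DFS (discovery) numbering of the vertices -/
  num : V → ℕ
  num_inj : Function.Injective num
  num_parent : ∀ v, v ≠ t.root → num (t.parent v) < num v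
  /-- number of chains -/
  k : ℕ
  /-- `src i = s(Cᵢ)`, the source (upper endpoint of the back-edge) of chain `i` -/
  src : Fin k → V
  /-- `low i`, the lower endpoint of the back-edge of chain `i` -/
  low : Fin k → V
  /-- `tgt i = t(Cᵢ)`, the target of chain `i` -/
  tgt : Fin k → V
  back_adj : ∀ i, G.Adj (src i) (low i)
  back_anc : ∀ i, t.Anc (src i) (low i)
  back_nontree : ∀ i, ¬ t.TreeEdge s(src i, low i)
  /-- distinct chains come from distinct back-edges -/
  back_inj : ∀ i j, s(src i, low i) = s(src j, low j) → i = j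
  /-- every back-edge of `G` generates a chain -/
  back_surj : ∀ e ∈ G.edgeSet, ¬ t.TreeEdge e → ∃ i, e = s(src i, low i)
  /-- chains are generated in DFS order of their sources -/
  ordered : ∀ i j : Fin k, i ≤ j → num (src i) ≤ num (src j)
  /-- the target lies on the tree path from `low i` to the root -/
  tgt_anc : ∀ i, t.Anc (tgt i) (low i)
  /-- the target is visited when chain `i` is built -/
  tgt_visited : ∀ i : Fin k,
    num (tgt i) ≤ num (src i) ∨
    ∃ j : Fin k, j < i ∧
      (tgt i = src j ∨ (t.Anc (tgt j) (tgt i) ∧ t.Anc (tgt i) (low j)))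
  /-- the target is the *first* visited vertex on the way up: no vertex strictly
  between `low i` and `tgt i` is visited when chain `i` is built -/
  path_unvisited : ∀ i : Fin k, ∀ u : V,
    t.Anc (tgt i) u → t.Anc u (low i) → u ≠ tgt i →
    num (src i) < num u ∧
    ∀ j : Fin k, j < i →
      ¬ (u = src j ∨ (t.Anc (tgt j) u ∧ t.Anc u (low j)))

/-- The edges of chain `i`: its back-edge together with the tree edges on the
tree path from `low i` up to `tgt i`. -/
def ChainDecomp.chainEdges {G : SimpleGraph V} {t : DFSTree G}
    (cd : ChainDecomp G t) (i : Fin cd.k) : Set (Sym2 V) :=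
  {s(cd.src i, cd.low i)} ∪
  {e | ∃ u : V, u ≠ cd.tgt i ∧ t.Anc (cd.tgt i) u ∧ t.Anc u (cd.low i) ∧
    e = s(u, t.parent u)}

/-- Vertex `v` s-belongs to chain `i`: either `v` is the root and `i` is the
first chain, or the tree edge from `v` to its parent lies on chain `i`. -/
def ChainDecomp.SBelongs {G : SimpleGraph V} {t : DFSTree G}
    (cd : ChainDecomp G t) (v : V) (i : Fin cd.k) : Prop :=
  (v = t.root ∧ (i : ℕ) = 0) ∨
  (v ≠ t.root ∧ s(v, t.parent v) ∈ cd.chainEdges i)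

/-- `j` is the parent of chain `i` in the parent-tree on chains: `i` is not the
first chain and `t(Cᵢ)` s-belongs to `Cⱼ`. -/
def ChainDecomp.ChainParent {G : SimpleGraph V} {t : DFSTree G}
    (cd : ChainDecomp G t) (j i : Fin cd.k) : Prop :=
  (i : ℕ) ≠ 0 ∧ cd.SBelongs (cd.tgt i) j

/-- `c` is an ancestor of `d` in the parent-tree on chains. -/
def ChainDecomp.ChainAnc {G : SimpleGraph V} {t : DFSTree G}
    (cd : ChainDecomp G t) (c d : Fin cd.k) : Prop :=
  Relation.ReflTransGen (fun b a => cd.ChainParent a b) d c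

set_option linter.unusedSectionVars false

section Aux

variable {G : SimpleGraph V}

namespace DFSTree

variable (t : DFSTree G)

lemma iterate_root (n : ℕ) : t.parent^[n] t.root = t.root := by
  induction n with
  | zero => rfl
  | succ n ih => rw [Function.iterate_succ_apply, t.parent_root, ih]

lemma anc_refl (a : V) : t.Anc a a := ⟨0, rfl⟩

lemma anc_trans {a b c : V} (h1 : t.Anc a b) (h2 : t.Anc b c) : t.Anc a c := by
  obtain ⟨n, hn⟩ := h1; obtain ⟨m, hm⟩ := h2
  exact ⟨n + m, by rw [Function.iterate_add_apply, hm, hn]⟩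

lemma anc_of_anc_root {u : V} (h : t.Anc u t.root) : u = t.root := by
  obtain ⟨n, hn⟩ := h; rw [t.iterate_root] at hn; exact hn.symm

lemma anc_linear {a b c : V} (h1 : t.Anc a c) (h2 : t.Anc b c) :
    t.Anc a b ∨ t.Anc b a := by
  obtain ⟨n, hn⟩ := h1; obtain ⟨m, hm⟩ := h2
  rcases le_total n m with h | h
  · right
    refine ⟨m - n, ?_⟩
    rw [← hn, ← Function.iterate_add_apply]
    have : m - n + n = m := by omega
    rw [this, hm]
  · left
    refine ⟨n - m, ?_⟩
    rw [← hm, ← Function.iterate_add_apply]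
    have : n - m + m = n := by omega
    rw [this, hn]

lemma anc_parent_of_ne {a b : V} (h : t.Anc a b) (hne : a ≠ b) :
    t.Anc a (t.parent b) := by
  obtain ⟨n, hn⟩ := h
  match n, hn with
  | 0, hn => exact absurd hn.symm hne
  | n+1, hn => exact ⟨n, by rw [← Function.iterate_succ_apply]; exact hn⟩

end DFSTree

namespace ChainDecomp

variable {t : DFSTree G} (cd : ChainDecomp G t)

lemma num_iterate_le (n : ℕ) (v : V) : cd.num (t.parent^[n] v) ≤ cd.num v := by
  induction n generalizing v with
  | zero => simp
  | succ n ih =>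
    rw [Function.iterate_succ_apply]
    refine (ih (t.parent v)).trans ?_
    by_cases hv : v = t.root
    · subst hv; rw [t.parent_root]
    · exact (cd.num_parent v hv).le

lemma anc_num_le {a b : V} (h : t.Anc a b) : cd.num a ≤ cd.num b := by
  obtain ⟨n, hn⟩ := h; exact hn ▸ cd.num_iterate_le n b

lemma anc_num_lt {a b : V} (h : t.Anc a b) (hne : a ≠ b) :
    cd.num a < cd.num b := by
  obtain ⟨n, hn⟩ := h
  match n, hn with
  | 0, hn => exact absurd hn.symm hne
  | n+1, hn =>
    by_cases hb : b = t.root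
    · subst hb; rw [t.iterate_root] at hn; exact absurd hn.symm hne
    · rw [Function.iterate_succ_apply] at hn
      calc cd.num a ≤ cd.num (t.parent b) := hn ▸ cd.num_iterate_le n _
        _ < cd.num b := cd.num_parent b hb

include cd in
lemma anc_antisymm {a b : V} (h1 : t.Anc a b) (h2 : t.Anc b a) : a = b :=
  cd.num_inj (le_antisymm (cd.anc_num_le h1) (cd.anc_num_le h2))

include cd in
lemma tree_edge_inj {u v : V} (hu : u ≠ t.root) (hv : v ≠ t.root)
    (h : s(u, t.parent u) = s(v, t.parent v)) : u = v := by
  rw [Sym2.eq_iff] at h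
  rcases h with ⟨h1, _⟩ | ⟨h1, h2⟩
  · exact h1
  · have h3 := cd.num_parent u hu
    have h4 := cd.num_parent v hv
    rw [h2] at h3
    rw [← h1] at h4
    omega

lemma of_sbelongs {v : V} {i : Fin cd.k} (hv : v ≠ t.root)
    (h : cd.SBelongs v i) :
    v ≠ cd.tgt i ∧ t.Anc (cd.tgt i) v ∧ t.Anc v (cd.low i) := by
  rcases h with ⟨h1, _⟩ | ⟨_, h2⟩
  · exact absurd h1 hv
  · simp only [ChainDecomp.chainEdges, Set.mem_union, Set.mem_singleton_iff,
      Set.mem_setOf_eq] at h2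
    rcases h2 with h2 | ⟨u, hu1, hu2, hu3, hu4⟩
    · exact absurd ⟨v, hv, h2.symm⟩ (cd.back_nontree i)
    · have hur : u ≠ t.root := by
        rintro rfl
        rw [t.parent_root, Sym2.eq_iff] at hu4
        rcases hu4 with ⟨h, _⟩ | ⟨h, _⟩ <;> exact hv h
      obtain rfl := cd.tree_edge_inj hv hur hu4
      exact ⟨hu1, hu2, hu3⟩

lemma sbelongs_of_on_chain {w : V} {i : Fin cd.k} (hw : w ≠ t.root)
    (h1 : w ≠ cd.tgt i) (h2 : t.Anc (cd.tgt i) w) (h3 : t.Anc w (cd.low i)) :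
    cd.SBelongs w i :=
  Or.inr ⟨hw, Set.mem_union_right _ ⟨w, h1, h2, h3, rfl⟩⟩

lemma sbelongs_unique {v : V} {i j : Fin cd.k}
    (hi : cd.SBelongs v i) (hj : cd.SBelongs v j) : i = j := by
  by_cases hv : v = t.root
  · rcases hi with ⟨_, hi⟩ | ⟨h, _⟩
    · rcases hj with ⟨_, hj⟩ | ⟨h, _⟩
      · exact Fin.ext (hi.trans hj.symm)
      · exact absurd hv h
    · exact absurd hv h
  · obtain ⟨hi1, hi2, hi3⟩ := cd.of_sbelongs hv hi
    obtain ⟨hj1, hj2, hj3⟩ := cd.of_sbelongs hv hj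
    rcases lt_trichotomy i j with h | h | h
    · exact absurd (Or.inr ⟨hi2, hi3⟩) ((cd.path_unvisited j v hj2 hj3 hj1).2 i h)
    · exact h
    · exact absurd (Or.inr ⟨hj2, hj3⟩) ((cd.path_unvisited i v hi2 hi3 hi1).2 j h)

lemma src_anc_tgt (i : Fin cd.k) : t.Anc (cd.src i) (cd.tgt i) := by
  rcases t.anc_linear (cd.back_anc i) (cd.tgt_anc i) with h | h
  · exact h
  · by_cases he : cd.src i = cd.tgt i
    · exact he ▸ t.anc_refl _
    · exact absurd (cd.path_unvisited i (cd.src i) h (cd.back_anc i) he).1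
        (lt_irrefl _)

end ChainDecomp

lemma exists_crossing_edge {H : SimpleGraph V} {S : Set V} :
    ∀ {a b : V}, H.Walk a b → a ∈ S → b ∉ S →
      ∃ x y, H.Adj x y ∧ x ∈ S ∧ y ∉ S := by
  intro a b w
  induction w with
  | nil => intro ha hb; exact absurd ha hb
  | @cons a c b hac p ih =>
    intro ha hb
    by_cases hc : c ∈ S
    · exact ih hc hb
    · exact ⟨a, c, hac, ha, hc⟩

namespace ChainDecomp

variable {t : DFSTree G} (cd : ChainDecomp G t)

lemma exists_cover (h2 : EdgeConnGE G 2) (w : V) (hw : w ≠ t.root) :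
    ∃ i : Fin cd.k, t.Anc (cd.src i) (t.parent w) ∧ t.Anc w (cd.low i) := by
  have hadj : G.Adj w (t.parent w) := t.parent_adj w hw
  set e : Sym2 V := s(w, t.parent w) with he
  have hconn : (G.deleteEdges ↑({e} : Finset (Sym2 V))).Connected :=
    h2.2 {e} (by simp)
  rw [Finset.coe_singleton] at hconn
  obtain ⟨p⟩ := hconn.preconnected w (t.parent w)
  have hwS : t.Anc w w := t.anc_refl w
  have hpS : ¬ t.Anc w (t.parent w) := by
    intro hp
    exact absurd (lt_of_le_of_lt (cd.anc_num_le hp) (cd.num_parent w hw))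
      (lt_irrefl _)
  obtain ⟨x, y, hxy, hxS, hyS⟩ :=
    exists_crossing_edge (S := {z | t.Anc w z}) p hwS hpS
  rw [SimpleGraph.deleteEdges_adj] at hxy
  obtain ⟨hxyG, hne⟩ := hxy
  have hne' : s(x, y) ≠ e := by simpa using hne
  have hxS : t.Anc w x := hxS
  have hyS : ¬ t.Anc w y := hyS
  have hyx : t.Anc y x := by
    rcases t.dfs_edge x y hxyG with h | h
    · exact absurd (t.anc_trans hxS h) hyS
    · exact h
  have hyw : t.Anc y w := by
    rcases t.anc_linear hyx hxS with h | h
    · exact h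
    · exact absurd h hyS
  have hyne : y ≠ w := by rintro rfl; exact hyS hwS
  have hypw : t.Anc y (t.parent w) := t.anc_parent_of_ne hyw hyne
  have hnt : ¬ t.TreeEdge s(x, y) := by
    rintro ⟨z, hz, hze⟩
    rw [Sym2.eq_iff] at hze
    rcases hze with ⟨h1, hh2⟩ | ⟨h1, hh2⟩
    · by_cases hxw : x = w
      · exact hne' (by rw [hh2, ← h1, hxw, he])
      · refine hyS ?_
        rw [hh2, ← h1]
        exact t.anc_parent_of_ne hxS (Ne.symm hxw)
    · have ha : t.Anc z (t.parent z) := by rw [← h1, ← hh2]; exact hyx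
      have := cd.anc_num_le ha
      have := cd.num_parent z hz
      omega
  obtain ⟨i, hi⟩ := cd.back_surj s(x, y) ((G.mem_edgeSet).mpr hxyG) hnt
  rw [Sym2.eq_iff] at hi
  rcases hi with ⟨h1, hh2⟩ | ⟨h1, hh2⟩
  · have hsl : cd.src i = cd.low i := by
      refine cd.anc_antisymm (cd.back_anc i) ?_
      rw [← h1, ← hh2]; exact hyx
    exact absurd hsl (cd.back_adj i).ne
  · exact ⟨i, hh2 ▸ hypw, h1 ▸ hxS⟩

lemma exists_sbelongs (h2 : EdgeConnGE G 2) (hk : 0 < cd.k) (w : V) :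
    ∃ i : Fin cd.k, cd.SBelongs w i := by
  by_cases hw : w = t.root
  · exact ⟨⟨0, hk⟩, Or.inl ⟨hw, rfl⟩⟩
  · classical
    have hex : ∃ n : ℕ, ∃ h : n < cd.k,
        t.Anc (cd.src ⟨n, h⟩) (t.parent w) ∧ t.Anc w (cd.low ⟨n, h⟩) := by
      obtain ⟨i, hi⟩ := cd.exists_cover h2 w hw
      exact ⟨i.val, i.isLt, hi⟩
    obtain ⟨hlt, hcov1, hcov2⟩ := Nat.find_spec hex
    set i : Fin cd.k := ⟨Nat.find hex, hlt⟩ with hi_def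
    by_cases hwt : w = cd.tgt i
    · exfalso
      have hbad : t.Anc w (cd.tgt i) := hwt ▸ t.anc_refl w
      have hA : cd.num (cd.src i) ≤ cd.num (t.parent w) := cd.anc_num_le hcov1
      have hB : cd.num (t.parent w) < cd.num w := cd.num_parent w hw
      have hC : cd.num w ≤ cd.num (cd.tgt i) := cd.anc_num_le hbad
      rcases cd.tgt_visited i with h4 | ⟨j, hj, h5⟩
      · omega
      · rcases h5 with h5 | ⟨h5, h6⟩
        · have hord := cd.ordered j i hj.le
          rw [← h5] at hord
          omega
        · have hwl : t.Anc w (cd.low j) := t.anc_trans hbad h6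
          have hjs : cd.num (cd.src j) ≤ cd.num (cd.src i) := cd.ordered j i hj.le
          have hsw : t.Anc (cd.src j) w := by
            rcases t.anc_linear (cd.back_anc j) hwl with h | h
            · exact h
            · have := cd.anc_num_le h; omega
          have hne : cd.src j ≠ w := by
            intro h
            rw [h] at hjs
            omega
          exact Nat.find_min hex hj ⟨j.isLt, t.anc_parent_of_ne hsw hne, hwl⟩
      -- (the contradiction above assumed Anc w (tgt i) via hwt)
    · rcases t.anc_linear hcov2 (cd.tgt_anc i) with h | h
      · -- h : Anc w (tgt i), same contradiction as before
        exfalso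
        have hA : cd.num (cd.src i) ≤ cd.num (t.parent w) := cd.anc_num_le hcov1
        have hB : cd.num (t.parent w) < cd.num w := cd.num_parent w hw
        have hC : cd.num w ≤ cd.num (cd.tgt i) := cd.anc_num_le h
        rcases cd.tgt_visited i with h4 | ⟨j, hj, h5⟩
        · omega
        · rcases h5 with h5 | ⟨h5, h6⟩
          · have hord := cd.ordered j i hj.le
            rw [← h5] at hord
            omega
          · have hwl : t.Anc w (cd.low j) := t.anc_trans h h6
            have hjs : cd.num (cd.src j) ≤ cd.num (cd.src i) := cd.ordered j i hj.le
            have hsw : t.Anc (cd.src j) w := by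
              rcases t.anc_linear (cd.back_anc j) hwl with h' | h'
              · exact h'
              · have := cd.anc_num_le h'; omega
            have hne : cd.src j ≠ w := by
              intro h'
              rw [h'] at hjs
              omega
            exact Nat.find_min hex hj ⟨j.isLt, t.anc_parent_of_ne hsw hne, hwl⟩
      · exact ⟨i, cd.sbelongs_of_on_chain hw hwt h hcov2⟩

end ChainDecomp

end Aux

/-- If `u` is an ancestor of `v` in the DFS tree of a 2-edge-connected graph,
`u` s-belongs to chain `C` and `v` s-belongs to chain `D`, then `C` is an
ancestor of `D` in the parent-tree on chains. -/
theorem stmt_18 (G : SimpleGraph V) (t : DFSTree G) (cd : ChainDecomp G t)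
    (h2 : EdgeConnGE G 2) (u v : V) (huv : t.Anc u v)
    (C D : Fin cd.k) (hu : cd.SBelongs u C) (hv : cd.SBelongs v D) :
    cd.ChainAnc C D := by
  have hk : 0 < cd.k := C.pos
  suffices H : ∀ n : ℕ, ∀ v u : V, ∀ C D : Fin cd.k, cd.num v < n →
      t.Anc u v → cd.SBelongs u C → cd.SBelongs v D → cd.ChainAnc C D by
    exact H (cd.num v + 1) v u C D (Nat.lt_succ_self _) huv hu hv
  intro n
  induction n with
  | zero => intro v u C D h; omega
  | succ n ih =>
    intro v u C D hn huv hu hv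
    by_cases hvroot : v = t.root
    · subst hvroot
      obtain rfl : u = t.root := t.anc_of_anc_root huv
      have hC : (C : ℕ) = 0 := by
        rcases hu with ⟨_, h⟩ | ⟨h, _⟩
        · exact h
        · exact absurd rfl h
      have hD : (D : ℕ) = 0 := by
        rcases hv with ⟨_, h⟩ | ⟨h, _⟩
        · exact h
        · exact absurd rfl h
      have hCD : C = D := Fin.ext (by omega)
      exact hCD ▸ Relation.ReflTransGen.refl
    · obtain ⟨hv1, hv2, hv3⟩ := cd.of_sbelongs hvroot hv
      have key : t.Anc u (cd.tgt D) ∨ (t.Anc (cd.tgt D) u ∧ u ≠ cd.tgt D) := by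
        rcases t.anc_linear huv hv2 with h | h
        · exact Or.inl h
        · by_cases he : u = cd.tgt D
          · exact Or.inl (by rw [he]; exact t.anc_refl _)
          · exact Or.inr ⟨h, he⟩
      rcases key with hcase | ⟨h1, hne2⟩
      · -- u is a (weak) ancestor of tgt D
        by_cases hD0 : (D : ℕ) = 0
        · -- tgt D = src D, and u must be the root
          have htd : cd.tgt D = cd.src D := by
            rcases cd.tgt_visited D with h | ⟨j, hj, _⟩
            · exact cd.num_inj
                (le_antisymm h (cd.anc_num_le (cd.src_anc_tgt D)))
            · exact absurd hj (by rw [Fin.lt_def, hD0]; omega)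
          have hu_root : u = t.root := by
            by_contra hur
            obtain ⟨hu1, hu2, hu3⟩ := cd.of_sbelongs hur hu
            have hA : cd.num (cd.src C) < cd.num u :=
              (cd.path_unvisited C u hu2 hu3 hu1).1
            have hB : cd.num u ≤ cd.num (cd.src D) :=
              cd.anc_num_le (htd ▸ hcase)
            have hC : cd.num (cd.src D) ≤ cd.num (cd.src C) :=
              cd.ordered D C (by rw [Fin.le_def, hD0]; omega)
            omega
          subst hu_root
          have hC : (C : ℕ) = 0 := by
            rcases hu with ⟨_, h⟩ | ⟨h, _⟩
            · exact h
            · exact absurd rfl h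
          have hCD : C = D := Fin.ext (by omega)
          exact hCD ▸ Relation.ReflTransGen.refl
        · -- recurse through the parent chain of D
          obtain ⟨D', hD'⟩ := cd.exists_sbelongs h2 hk (cd.tgt D)
          have hrec : cd.ChainAnc C D' := by
            refine ih (cd.tgt D) u C D' ?_ hcase hu hD'
            have := cd.anc_num_lt hv2 (Ne.symm hv1)
            omega
          exact Relation.ReflTransGen.head ⟨hD0, hD'⟩ hrec
      · -- u lies strictly on chain D, so C = D
        have hur : u ≠ t.root := by
          rintro rfl
          exact hne2 (t.anc_of_anc_root h1).symm
        have huD : cd.SBelongs u D :=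
          cd.sbelongs_of_on_chain hur hne2 h1 (t.anc_trans huv hv3)
        have hCD : C = D := cd.sbelongs_unique hu huD
        exact hCD ▸ Relation.ReflTransGen.refl
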